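/- For every integer n ≥ 3, with κ_i the number of tuples (x_1,…,x_{n−1}, y_2,…,y_{n−1}) of nonnegative integers satisfying x_1 + (y_2 + ⋯ + y_{n−1}) = n − 2 − i and x_d + (y_d + ⋯ + y_{n−1}) = n − 1 − d for each 2 ≤ d ≤ n−1, the following identity holds: Σ_{i=0}^{n−2} binom(2n−4, i) · κ_i = C_{n−2} · n · 2^{n−3}, where C_{n−2} = binom(2n−4, n−2)/(n−1) is the Catalan number. -/

import Mathlib

/-!
Write `m = n - 2`. The variables `x_d` are slacks, so `κ_i` counts the tuples `y ∈ ℕ^m` whose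
suffix sums satisfy `S_k ≤ m - 1 - k` and `S_0 ≤ m - i`. Splitting off the first entry of `y`
gives a Pascal-type recursion in `m`, which identifies these counts with the ballot numbers
`(m + 1 - j) / (m + 1) · C(m + j, j)`, `j = m - i`. Since
`C(2m, i) · C(2m - i, m - i) = C(2m, m) · C(m, i)` and `C(2m, m) = (m + 1) C_m`, the sum becomes
`C_m · ∑ (i + 1) C(m, i) = C_m · (m + 2) · 2^(m - 1)`.
-/

namespace Caracol

open Finset

def suffixSum {m : ℕ} (y : Fin m → ℕ) (k : ℕ) : ℕ :=
  ∑ l ∈ univ.filter (fun l : Fin m => k ≤ (l : ℕ)), y l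

section suffixSum

variable {m : ℕ}

lemma suffixSum_zero (y : Fin m → ℕ) : suffixSum y 0 = ∑ l, y l := by
  simp [suffixSum]

lemma suffixSum_cons_zero (a : ℕ) (y : Fin m → ℕ) :
    suffixSum (Fin.cons a y : Fin (m + 1) → ℕ) 0 = a + suffixSum y 0 := by
  simp [suffixSum_zero, Fin.sum_cons]

lemma suffixSum_cons_succ (a : ℕ) (y : Fin m → ℕ) (k : ℕ) :
    suffixSum (Fin.cons a y : Fin (m + 1) → ℕ) (k + 1) = suffixSum y k := by
  simp [suffixSum, sum_filter, Fin.sum_univ_succ]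

lemma le_suffixSum (y : Fin m → ℕ) (l : Fin m) : y l ≤ suffixSum y l :=
  single_le_sum (fun _ _ => Nat.zero_le _) (mem_filter.2 ⟨mem_univ l, le_rfl⟩)

lemma suffixSum_tsub_two (y : Fin m → ℕ) (d : ℕ) :
    suffixSum y (d - 2) = ∑ l ∈ univ.filter (fun l : Fin m => d ≤ (l : ℕ) + 2), y l := by
  simp only [suffixSum, Nat.sub_le_iff_le_add]

end suffixSum

/-- The bound `y l < m` only makes the set finite; it follows from the suffix-sum bounds. -/
def ballotTuples (m j : ℕ) : Finset (Fin m → ℕ) :=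
  {y ∈ Fintype.piFinset fun _ => range m |
    (∀ k < m, suffixSum y k ≤ m - 1 - k) ∧ suffixSum y 0 ≤ j}

lemma mem_ballotTuples {m j : ℕ} {y : Fin m → ℕ} :
    y ∈ ballotTuples m j ↔ (∀ k < m, suffixSum y k ≤ m - 1 - k) ∧ suffixSum y 0 ≤ j := by
  refine ⟨fun h => (mem_filter.1 h).2,
    fun h => mem_filter.2 ⟨Fintype.mem_piFinset.2 fun l => ?_, h⟩⟩
  have := le_suffixSum y l
  have := h.1 l l.2
  rw [mem_range]
  omega

lemma cons_mem_ballotTuples_succ {m j a : ℕ} {y : Fin m → ℕ} :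
    (Fin.cons a y : Fin (m + 1) → ℕ) ∈ ballotTuples (m + 1) j ↔
      a ≤ min j m ∧ y ∈ ballotTuples m (min j m - a) := by
  simp only [mem_ballotTuples, suffixSum_cons_zero]
  constructor
  · rintro ⟨hk, hj⟩
    have h0 := hk 0 (by omega)
    rw [suffixSum_cons_zero] at h0
    refine ⟨by omega, fun k hk' => ?_, by omega⟩
    have := hk (k + 1) (by omega)
    rw [suffixSum_cons_succ] at this
    omega
  · rintro ⟨ha, hk, hj⟩
    refine ⟨fun k hk' => ?_, by omega⟩
    cases k with
    | zero => rw [suffixSum_cons_zero]; omega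
    | succ k =>
      rw [suffixSum_cons_succ]
      have := hk k (by omega)
      omega

lemma card_ballotTuples_succ (m j : ℕ) :
    #(ballotTuples (m + 1) j) = ∑ b ∈ range (min j m + 1), #(ballotTuples m b) := by
  rw [← sum_range_reflect, ← card_sigma]
  refine card_nbij' (fun y => ⟨y 0, Fin.tail y⟩) (fun p => Fin.cons p.1 p.2) ?_ ?_ ?_ ?_
  · intro y hy
    rw [mem_coe, ← Fin.cons_self_tail y, cons_mem_ballotTuples_succ] at hy
    simpa [Nat.lt_succ_iff] using hy
  · rintro ⟨a, y⟩ hy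
    dsimp only at hy ⊢
    simp only [coe_sigma, Set.mem_sigma_iff, mem_coe, mem_range, add_tsub_cancel_right] at hy
    exact cons_mem_ballotTuples_succ.2 ⟨by omega, hy.2⟩
  · intro y _
    exact Fin.cons_self_tail y
  · rintro ⟨a, y⟩ _
    simp

lemma card_ballotTuples_zero_left (j : ℕ) : #(ballotTuples 0 j) = 1 :=
  card_eq_one.2 ⟨Fin.elim0, eq_singleton_iff_unique_mem.2
    ⟨mem_ballotTuples.2 ⟨by simp, by simp [suffixSum]⟩, fun _ _ => Subsingleton.elim _ _⟩⟩

lemma card_ballotTuples_zero_right : ∀ m, #(ballotTuples m 0) = 1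
  | 0 => card_ballotTuples_zero_left 0
  | m + 1 => by simp [card_ballotTuples_succ, card_ballotTuples_zero_right m]

/-- The ballot number `2 C(m+j, j) - C(m+j+1, j)`, stated additively to avoid truncated
subtraction. -/
theorem card_ballotTuples_add_choose {m j : ℕ} (h : j ≤ m) :
    #(ballotTuples m j) + (m + j + 1).choose j = 2 * (m + j).choose j := by
  induction m generalizing j with
  | zero =>
    obtain rfl : j = 0 := by omega
    simp [card_ballotTuples_zero_left]
  | succ m ih =>
    have partial_sum : ∀ j ≤ m, ∑ b ∈ range (j + 1), #(ballotTuples m b) +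
        (m + j + 2).choose j = 2 * (m + j + 1).choose j := by
      intro j hj
      induction j with
      | zero => simp [card_ballotTuples_zero_right]
      | succ j ihj =>
        have hD : #(ballotTuples m (j + 1)) + (m + j + 2).choose (j + 1) =
            2 * (m + j + 1).choose (j + 1) := ih hj
        have p₁ := Nat.choose_succ_succ' (m + j + 2) j
        have p₂ := Nat.choose_succ_succ' (m + j + 1) j
        have := ihj (by omega)
        rw [sum_range_succ, show m + (j + 1) + 2 = m + j + 2 + 1 by ring,
          show m + (j + 1) + 1 = m + j + 1 + 1 by ring]
        omega
    rw [card_ballotTuples_succ]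
    rcases h.lt_or_eq with h | rfl
    · rw [min_eq_left (by omega), show m + 1 + j + 1 = m + j + 2 by ring,
        show m + 1 + j = m + j + 1 by ring]
      exact partial_sum j (by omega)
    · have hm := partial_sum m le_rfl
      have p₁ := Nat.choose_succ_succ' (m + m + 2) m
      have p₂ : (m + m + 2).choose (m + 1) = (m + m + 1).choose m + (m + m + 1).choose (m + 1) :=
        Nat.choose_succ_succ' (m + m + 1) m
      have hsymm : (m + m + 1).choose (m + 1) = (m + m + 1).choose m := by
        rw [Nat.choose_symm_of_eq_add]; ring
      rw [min_eq_right (by omega), show m + 1 + (m + 1) + 1 = m + m + 2 + 1 by ring,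
        show m + 1 + (m + 1) = m + m + 2 by ring]
      omega

theorem succ_mul_card_ballotTuples {m j : ℕ} (h : j ≤ m) :
    (m + 1) * #(ballotTuples m j) = (m + 1 - j) * (m + j).choose j := by
  have hD := card_ballotTuples_add_choose h
  have hC := Nat.choose_mul_succ_eq (m + j) j
  obtain ⟨u, rfl⟩ := Nat.exists_eq_add_of_le h
  rw [show j + u + j + 1 - j = j + u + 1 by omega] at hC
  rw [show j + u + 1 - j = u + 1 by omega]
  zify at hD hC ⊢
  linear_combination (j + u + 1 : ℤ) * hD + hC

/-- The values of `x_1, …, x_{m+1}` forced by `y` in the system defining `κ_i`. -/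
def slack (m j : ℕ) (y : Fin m → ℕ) : Fin (m + 1) → ℕ :=
  Fin.cons (j - suffixSum y 0) fun t => m - 1 - t - suffixSum y t

theorem flow_equations_iff_eq_slack {m j : ℕ} {x : Fin (m + 1) → ℕ} {y : Fin m → ℕ} :
    ((x ⟨0, by omega⟩ + ∑ l, y l = j) ∧
      (∀ d : ℕ, ∀ _h1 : 2 ≤ d, ∀ _h2 : d ≤ m + 1,
        x ⟨d - 1, by omega⟩ + ∑ l ∈ univ.filter (fun l : Fin m => d ≤ (l : ℕ) + 2), y l
          = m + 1 - d)) ↔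
      y ∈ ballotTuples m j ∧ x = slack m j y := by
  simp only [← suffixSum_tsub_two, ← suffixSum_zero]
  constructor
  · rintro ⟨h₀, h⟩
    refine ⟨mem_ballotTuples.2 ⟨fun k hk => ?_, by omega⟩, funext fun t => ?_⟩
    · have : x ⟨k + 1, by omega⟩ + suffixSum y k = m + 1 - (k + 2) :=
        h (k + 2) (by omega) (by omega)
      omega
    · refine Fin.cases ?_ (fun t => ?_) t
      · show x ⟨0, _⟩ = j - suffixSum y 0
        omega
      · have : x t.succ + suffixSum y t = m + 1 - (t + 2) := h (t + 2) (by omega) (by omega)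
        simp only [slack, Fin.cons_succ]
        omega
  · rintro ⟨hy, rfl⟩
    obtain ⟨hk, hj⟩ := mem_ballotTuples.1 hy
    refine ⟨by simp [slack]; omega, fun d hd₁ hd₂ => ?_⟩
    obtain ⟨k, rfl⟩ := Nat.exists_eq_add_of_le' hd₁
    have := hk k (by omega)
    show slack m j y (Fin.succ ⟨k, by omega⟩) + _ = _
    simp only [slack, Fin.cons_succ, Nat.add_sub_cancel]
    omega

theorem card_flow_equations (m j : ℕ) :
    Nat.card {p : (Fin (m + 1) → ℕ) × (Fin m → ℕ) //
      (p.1 ⟨0, by omega⟩ + ∑ l, p.2 l = j) ∧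
      (∀ d : ℕ, ∀ _h1 : 2 ≤ d, ∀ _h2 : d ≤ m + 1,
        p.1 ⟨d - 1, by omega⟩ + ∑ l ∈ univ.filter (fun l : Fin m => d ≤ (l : ℕ) + 2), p.2 l
          = m + 1 - d)} = #(ballotTuples m j) := by
  rw [← Nat.card_eq_finsetCard]
  refine Nat.card_congr
    { toFun := fun p => ⟨p.1.2, (flow_equations_iff_eq_slack.1 p.2).1⟩
      invFun := fun y => ⟨(slack m j y, y), flow_equations_iff_eq_slack.2 ⟨y.2, rfl⟩⟩
      left_inv := fun p =>
        Subtype.ext (Prod.ext (flow_equations_iff_eq_slack.1 p.2).2.symm rfl)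
      right_inv := fun _ => rfl }

lemma sum_range_succ_mul_choose {m : ℕ} (hm : 1 ≤ m) :
    ∑ i ∈ range (m + 1), (i + 1) * m.choose i = (m + 2) * 2 ^ (m - 1) := by
  obtain ⟨k, rfl⟩ := Nat.exists_eq_add_of_le' hm
  simp only [add_mul, one_mul, sum_add_distrib, Nat.sum_range_mul_choose, Nat.sum_range_choose]
  rw [Nat.add_sub_cancel, pow_succ]
  ring

lemma choose_two_mul_mul_succ_mul_card_ballotTuples {m i : ℕ} (hi : i ≤ m) :
    (2 * m).choose i * ((m + 1) * #(ballotTuples m (m - i))) =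
      (m + 1) * catalan m * ((i + 1) * m.choose i) := by
  rw [succ_mul_card_ballotTuples (Nat.sub_le m i), succ_mul_catalan_eq_centralBinom,
    Nat.centralBinom_eq_two_mul_choose, mul_left_comm _ (i + 1), Nat.choose_mul hi,
    show m + 1 - (m - i) = i + 1 by omega, show m + (m - i) = 2 * m - i by omega]
  ring

end Caracol

open Finset Caracol in
theorem stmt9 (n : ℕ) (hn : 3 ≤ n) (κ : ℕ → ℕ)
    (hκ : ∀ i, κ i = Nat.card {p : (Fin (n - 1) → ℕ) × (Fin (n - 2) → ℕ) //
      (p.1 ⟨0, by omega⟩ + ∑ j, p.2 j = n - 2 - i) ∧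
      (∀ d : ℕ, ∀ _h1 : 2 ≤ d, ∀ _h2 : d ≤ n - 1,
        p.1 ⟨d - 1, by omega⟩ +
          ∑ j ∈ Finset.univ.filter (fun j : Fin (n - 2) => d ≤ (j : ℕ) + 2), p.2 j
        = n - 1 - d)}) :
    ∑ i ∈ Finset.range (n - 1), Nat.choose (2 * n - 4) i * κ i =
      catalan (n - 2) * n * 2 ^ (n - 3) := by
  obtain ⟨m, rfl⟩ : ∃ m, n = m + 2 := ⟨n - 2, by omega⟩
  have hκ' : ∀ i, κ i = #(ballotTuples m (m - i)) :=
    fun i => (hκ i).trans (card_flow_equations m _)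
  rw [show m + 2 - 1 = m + 1 from rfl, show 2 * (m + 2) - 4 = 2 * m by omega,
    show m + 2 - 2 = m from rfl, show m + 2 - 3 = m - 1 from rfl]
  refine Nat.eq_of_mul_eq_mul_left (Nat.succ_pos m) ?_
  calc (m + 1) * ∑ i ∈ range (m + 1), (2 * m).choose i * κ i
      = ∑ i ∈ range (m + 1), (m + 1) * catalan m * ((i + 1) * m.choose i) := by
        rw [mul_sum]
        refine sum_congr rfl fun i hi => ?_
        rw [hκ', ← choose_two_mul_mul_succ_mul_card_ballotTuples
          (Nat.lt_succ_iff.1 (mem_range.1 hi))]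
        ring
    _ = (m + 1) * (catalan m * (m + 2) * 2 ^ (m - 1)) := by
        rw [← mul_sum, sum_range_succ_mul_choose (by omega)]
        ring
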